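/- Let K ≥ 1 be an integer, 0 ≤ ε < 1, μ > 0, and τ ≥ 0. Then Σ_{ρ=K}^∞ C(ρ−1, K−1) ε^{ρ−K}(1−ε)^K [τ γ(μτ, ρ) − (ρ/μ) γ(μτ, ρ+1)] = ∫_0^∞ max(τ − y, 0) · ((1−ε)μ)^K y^{K−1} e^{−(1−ε)μ y}/(K−1)! dy, where γ(x, ρ) = (1/(ρ−1)!) ∫_0^x t^{ρ−1} e^{−t} dt is the normalized lower incomplete Gamma function and C(·,·) is the binomial coefficient. -/

import Mathlib

/-!
Writing `e^{-(1-ε)μy} = e^{-μy} e^{εμy}` and expanding `e^{εμy}` as a power series exhibits the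
Gamma(K, (1-ε)μ) density as the negative-binomial mixture `∑ₙ C(n+K-1, K-1) εⁿ (1-ε)^K` of the
Erlang(n+K, μ) densities. On `[0, τ]` the series is dominated, so it may be integrated termwise
against `τ - y`; for an Erlang(ρ, μ) density `f_ρ`, the identity `y f_ρ(y) = (ρ/μ) f_{ρ+1}(y)` and the
substitution `t = μy` give `∫₀^τ (τ - y) f_ρ = τ γ(μτ, ρ) - (ρ/μ) γ(μτ, ρ+1)`.
-/

open Real MeasureTheory

/-- The normalized lower incomplete Gamma function
`γ(x, ρ) = (1/(ρ-1)!) ∫_0^x t^{ρ-1} e^{-t} dt`. -/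
noncomputable def normIncGamma (x : ℝ) (ρ : ℕ) : ℝ :=
  (1 / (Nat.factorial (ρ - 1) : ℝ)) * ∫ t in (0 : ℝ)..x, t ^ (ρ - 1) * Real.exp (-t)

open scoped Nat

theorem hasSum_integral_mul_pow_div_factorial {α : Type*} [MeasurableSpace α] {ν : Measure α}
    {f c : α → ℝ} {R : ℝ} (hf : Integrable f ν) (hc : AEStronglyMeasurable c ν)
    (hcR : ∀ᵐ x ∂ν, |c x| ≤ R) :
    HasSum (fun n : ℕ => ∫ x, f x * (c x ^ n / n !) ∂ν) (∫ x, f x * exp (c x) ∂ν) := by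
  have hbound : ∀ n : ℕ, ∀ᵐ x ∂ν, ‖c x ^ n / (n ! : ℝ)‖ ≤ R ^ n / n ! := fun n => by
    filter_upwards [hcR] with x hx
    rw [norm_div, norm_pow, Real.norm_natCast, Real.norm_eq_abs]
    gcongr
  have hint : ∀ n : ℕ, Integrable (fun x => f x * (c x ^ n / n !)) ν := fun n =>
    hf.mul_bdd (by fun_prop) (hbound n)
  have hnorm : ∀ n : ℕ,
      ∫ x, ‖f x * (c x ^ n / n !)‖ ∂ν ≤ (∫ x, ‖f x‖ ∂ν) * (R ^ n / n !) := fun n => by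
    rw [← integral_mul_const]
    refine integral_mono_ae (hint n).norm (hf.norm.mul_const _) ?_
    filter_upwards [hbound n] with x hx
    rw [norm_mul]
    exact mul_le_mul_of_nonneg_left hx (norm_nonneg _)
  have hsum : Summable fun n : ℕ => ∫ x, ‖f x * (c x ^ n / n !)‖ ∂ν :=
    .of_nonneg_of_le (fun n => integral_nonneg fun x => norm_nonneg _) hnorm
      ((summable_pow_div_factorial R).mul_left _)
  have hexp (x : α) : ∑' n : ℕ, f x * (c x ^ n / n !) = f x * exp (c x) := by
    rw [tsum_mul_left, (NormedSpace.expSeries_div_hasSum_exp (c x)).tsum_eq, exp_eq_exp_ℝ]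
  simpa only [hexp] using hasSum_integral_of_summable_integral_norm hint hsum

theorem setIntegral_Ioi_zero_max_sub_mul {τ : ℝ} (hτ : 0 ≤ τ) (g : ℝ → ℝ) :
    ∫ y in Set.Ioi 0, max (τ - y) 0 * g y = ∫ y in 0..τ, (τ - y) * g y := by
  rw [intervalIntegral.integral_of_le hτ,
    setIntegral_eq_of_subset_of_forall_sdiff_eq_zero measurableSet_Ioi Set.Ioc_subset_Ioi_self]
  · refine setIntegral_congr_fun measurableSet_Ioc fun y hy => ?_
    rw [max_eq_left (sub_nonneg.2 hy.2)]
  · rintro y ⟨hy0, hyτ⟩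
    rw [max_eq_right (by simp_all [le_of_lt]), zero_mul]

noncomputable def erlangPDF (r : ℝ) (k : ℕ) (y : ℝ) : ℝ :=
  r ^ k * y ^ (k - 1) * exp (-(r * y)) / (k - 1)!

@[fun_prop]
theorem continuous_erlangPDF (r : ℝ) (k : ℕ) : Continuous (erlangPDF r k) := by
  unfold erlangPDF
  fun_prop

theorem intervalIntegral_erlangPDF (r τ : ℝ) {k : ℕ} (hk : k ≠ 0) :
    ∫ y in 0..τ, erlangPDF r k y = normIncGamma (r * τ) k := by
  obtain ⟨m, rfl⟩ := Nat.exists_eq_add_one_of_ne_zero hk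
  have h := intervalIntegral.mul_integral_comp_mul_left (a := 0) (b := τ)
    (f := fun t => t ^ m * exp (-t)) r
  rw [mul_zero] at h
  rw [normIncGamma, Nat.add_sub_cancel, ← h, ← intervalIntegral.integral_const_mul,
    ← intervalIntegral.integral_const_mul]
  congr 1 with y
  simp only [erlangPDF, Nat.add_sub_cancel]
  ring

theorem mul_erlangPDF {r : ℝ} (hr : r ≠ 0) {k : ℕ} (hk : k ≠ 0) (y : ℝ) :
    y * erlangPDF r k y = k / r * erlangPDF r (k + 1) y := by
  obtain ⟨m, rfl⟩ := Nat.exists_eq_add_one_of_ne_zero hk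
  simp only [erlangPDF, Nat.add_sub_cancel, Nat.factorial_succ]
  push_cast
  field_simp
  ring

theorem integral_sub_mul_erlangPDF {r : ℝ} (hr : r ≠ 0) {k : ℕ} (hk : k ≠ 0) (τ : ℝ) :
    ∫ y in 0..τ, (τ - y) * erlangPDF r k y
      = τ * normIncGamma (r * τ) k - k / r * normIncGamma (r * τ) (k + 1) := by
  simp only [sub_mul, mul_erlangPDF hr hk]
  rw [intervalIntegral.integral_sub, intervalIntegral.integral_const_mul,
    intervalIntegral.integral_const_mul, intervalIntegral_erlangPDF r τ hk,
    intervalIntegral_erlangPDF r τ k.succ_ne_zero]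
  all_goals exact (by fun_prop : Continuous _).intervalIntegrable _ _

theorem choose_mul_erlangPDF_add (ε r y : ℝ) (n : ℕ) {k : ℕ} (hk : k ≠ 0) :
    ((n + k - 1).choose (k - 1) : ℝ) * ε ^ n * erlangPDF r (n + k) y
      = erlangPDF r k y * ((ε * r * y) ^ n / n !) := by
  obtain ⟨m, rfl⟩ := Nat.exists_eq_add_one_of_ne_zero hk
  have hfac : ((n + m).choose m : ℝ) * n ! * m ! = (n + m)! := by
    exact_mod_cast Nat.add_choose_mul_factorial_mul_factorial n m
  have hchoose : ((n + m).choose m : ℝ) ≠ 0 :=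
    Nat.cast_ne_zero.2 (Nat.choose_pos (Nat.le_add_left m n)).ne'
  simp only [erlangPDF, ← add_assoc, Nat.add_sub_cancel]
  rw [← hfac]
  field_simp
  ring

theorem erlangPDF_one_sub_mul (ε r y : ℝ) (k : ℕ) :
    erlangPDF ((1 - ε) * r) k y = (1 - ε) ^ k * erlangPDF r k y * exp (ε * r * y) := by
  have hexp : exp (-((1 - ε) * r * y)) = exp (-(r * y)) * exp (ε * r * y) := by
    rw [← exp_add]; ring_nf
  simp only [erlangPDF, mul_pow, hexp]
  ring

theorem H_eq_expected_waiting_general (K : ℕ) (hK : 1 ≤ K) (ε μ τ : ℝ)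
    (hμ : 0 < μ) (hτ : 0 ≤ τ) :
    ∑' n : ℕ, (Nat.choose (n + K - 1) (K - 1) : ℝ) * ε ^ n * (1 - ε) ^ K *
        (τ * normIncGamma (μ * τ) (n + K)
          - ((n + K : ℕ) : ℝ) / μ * normIncGamma (μ * τ) (n + K + 1))
      = ∫ y in Set.Ioi (0 : ℝ),
          max (τ - y) 0 * (((1 - ε) * μ) ^ K * y ^ (K - 1) * Real.exp (-(1 - ε) * μ * y)
            / (Nat.factorial (K - 1))) := by
  have hK0 : K ≠ 0 := Nat.one_le_iff_ne_zero.mp hK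
  set f : ℝ → ℝ := fun y => (τ - y) * ((1 - ε) ^ K * erlangPDF μ K y)
  have hterm (n : ℕ) : (Nat.choose (n + K - 1) (K - 1) : ℝ) * ε ^ n * (1 - ε) ^ K *
      (τ * normIncGamma (μ * τ) (n + K)
        - ((n + K : ℕ) : ℝ) / μ * normIncGamma (μ * τ) (n + K + 1))
      = ∫ y in 0..τ, f y * ((ε * μ * y) ^ n / n !) := by
    rw [← integral_sub_mul_erlangPDF hμ.ne' (by omega), ← intervalIntegral.integral_const_mul]
    refine intervalIntegral.integral_congr fun y _ => ?_
    linear_combination ((1 - ε) ^ K * (τ - y)) * choose_mul_erlangPDF_add ε μ y n hK0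
  have hseries : HasSum (fun n : ℕ => ∫ y in 0..τ, f y * ((ε * μ * y) ^ n / n !))
      (∫ y in 0..τ, f y * exp (ε * μ * y)) := by
    simp only [intervalIntegral.integral_of_le hτ]
    refine hasSum_integral_mul_pow_div_factorial (R := |ε * μ| * τ)
      (by fun_prop : Continuous f).integrableOn_Ioc (by fun_prop) ?_
    refine ae_restrict_of_forall_mem measurableSet_Ioc fun y hy => ?_
    rw [abs_mul, abs_of_pos hy.1]
    exact mul_le_mul_of_nonneg_left hy.2 (abs_nonneg _)
  rw [setIntegral_Ioi_zero_max_sub_mul hτ, tsum_congr hterm, hseries.tsum_eq]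
  refine intervalIntegral.integral_congr fun y _ => ?_
  have hpdf : ((1 - ε) * μ) ^ K * y ^ (K - 1) * exp (-(1 - ε) * μ * y) / (K - 1)!
      = erlangPDF ((1 - ε) * μ) K y := by
    simp only [erlangPDF, neg_mul]
  rw [hpdf, erlangPDF_one_sub_mul]
  ring

/-- The function `H(τ)` of the paper (eq. (30)) equals the expected waiting time
`E[(τ - Ỹ)^+]` where `Ỹ` has the Gamma(K, (1-ε)μ) density (sum reindexed by `ρ = n + K`). -/
theorem H_eq_expected_waiting (K : ℕ) (hK : 1 ≤ K) (ε μ τ : ℝ)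
    (hε0 : 0 ≤ ε) (hε1 : ε < 1) (hμ : 0 < μ) (hτ : 0 ≤ τ) :
    ∑' n : ℕ, (Nat.choose (n + K - 1) (K - 1) : ℝ) * ε ^ n * (1 - ε) ^ K *
        (τ * normIncGamma (μ * τ) (n + K)
          - ((n + K : ℕ) : ℝ) / μ * normIncGamma (μ * τ) (n + K + 1))
      = ∫ y in Set.Ioi (0 : ℝ),
          max (τ - y) 0 * (((1 - ε) * μ) ^ K * y ^ (K - 1) * Real.exp (-(1 - ε) * μ * y)
            / (Nat.factorial (K - 1))) :=
  H_eq_expected_waiting_general K hK ε μ τ hμ hτ
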